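/- Let θ > 0 and F(u) := θ ∫₀^u e^{-t} ₁F₁(θ,1,t) dt. Then for all a > 0 and v ≥ 0, ∫₀¹ β⁻¹(1-β)^{θ-1} e^{avβ} F(avβ) dβ = e^{av} − 1. -/

import Mathlib

/-!
Write `M = ₁F₁(θ, 1, ·) = ∑ cₙ uⁿ` with `cₙ = θ^{(n)}/(n!)²`. Kummer's equation
`u M'' + (1 - u) M' = θ M` says that `u M'(u)` has derivative `u M'(u) + θ M(u)`, so
`e^{-u} u M'(u)` and `F` have the same derivative `θ e^{-u} M(u)` and both vanish at `0`:
`e^u F(u) = u M'(u) = ∑_{n ≥ 1} n cₙ uⁿ`. Against the weight `β⁻¹ (1 - β)^{θ-1}` the Beta integral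
`∫₀¹ β^{n-1} (1 - β)^{θ-1} dβ = (n-1)!/θ^{(n)}` turns `n cₙ` into `1/n!`, and
`∑_{n ≥ 1} (av)ⁿ/n! = e^{av} - 1`.
-/

open MeasureTheory

/-- The rising factorial `θ^{(n)} = θ(θ+1)⋯(θ+n-1)`, with `θ^{(0)} = 1`. -/
noncomputable def risingFactorial (θ : ℝ) (n : ℕ) : ℝ := ∏ i ∈ Finset.range n, (θ + (i : ℝ))

/-- Kummer's confluent hypergeometric function `₁F₁(θ, 1, t) = ∑_{n≥0} θ^{(n)} tⁿ/(n!)²`. -/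
noncomputable def kummerM (θ t : ℝ) : ℝ :=
  ∑' n : ℕ, risingFactorial θ n * t ^ n / ((Nat.factorial n : ℝ)) ^ 2

/-- `F(u) = θ ∫₀^u e^{-t} ₁F₁(θ,1,t) dt`. -/
noncomputable def Fkum (θ u : ℝ) : ℝ := θ * ∫ t in (0:ℝ)..u, Real.exp (-t) * kummerM θ t

open scoped Nat

section PowerSeries

variable {𝕜 : Type*} [RCLike 𝕜] {c : ℕ → 𝕜}

theorem summable_mul_pow_of_forall_summable (hc : ∀ r : ℝ, Summable fun n => ‖c n‖ * r ^ n)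
    (z : 𝕜) : Summable fun n => c n * z ^ n :=
  .of_norm_bounded (hc ‖z‖) fun n => by rw [norm_mul, norm_pow]

theorem forall_summable_natCast_mul (hc : ∀ r : ℝ, Summable fun n => ‖c n‖ * r ^ n) (r : ℝ) :
    Summable fun n : ℕ => ‖(n : 𝕜) * c n‖ * r ^ n := by
  refine .of_norm_bounded (hc (2 * |r|)) fun n => ?_
  have hn : (n : ℝ) ≤ 2 ^ n := by exact_mod_cast n.lt_two_pow_self.le
  rw [Real.norm_eq_abs, abs_mul, abs_norm, abs_pow, norm_mul, RCLike.norm_natCast, mul_pow]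
  calc n * ‖c n‖ * |r| ^ n ≤ 2 ^ n * ‖c n‖ * |r| ^ n := by gcongr
    _ = ‖c n‖ * (2 ^ n * |r| ^ n) := by ring

theorem hasDerivAt_tsum_mul_pow (hc : ∀ r : ℝ, Summable fun n => ‖c n‖ * r ^ n) (z : 𝕜) :
    HasDerivAt (fun z => ∑' n, c n * z ^ n) (∑' n : ℕ, ((n : 𝕜) + 1) * c (n + 1) * z ^ n) z := by
  set R := ‖z‖ + 1
  have hR : 1 ≤ R := by simp [R]
  have hz : z ∈ Metric.ball (0 : 𝕜) R := by simp [R]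
  have hshift : (fun z => ∑' n, c n * z ^ n) = fun z => c 0 + ∑' n, c (n + 1) * z ^ (n + 1) := by
    funext w
    simp [(summable_mul_pow_of_forall_summable hc w).tsum_eq_zero_add]
  rw [hshift]
  refine .const_add _ <| hasDerivAt_tsum_of_isPreconnected
    (g := fun n y => c (n + 1) * y ^ (n + 1)) (g' := fun n y => ((n : 𝕜) + 1) * c (n + 1) * y ^ n)
    (u := fun n => ‖c (n + 1)‖ * (2 * R) ^ (n + 1))
    ((summable_nat_add_iff (f := fun n => ‖c n‖ * (2 * R) ^ n) 1).2 (hc (2 * R)))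
    Metric.isOpen_ball (convex_ball 0 R).isPreconnected (fun n y _ => ?_) (fun n y hy => ?_) hz
    ((summable_nat_add_iff (f := fun n => c n * z ^ n) 1).2
      (summable_mul_pow_of_forall_summable hc z)) hz
  · exact ((hasDerivAt_pow (n + 1) y).const_mul (c (n + 1))).congr_deriv
      (by rw [Nat.add_sub_cancel]; push_cast; ring)
  · have hy : ‖y‖ ≤ R := by simpa using (Metric.mem_ball.1 hy).le
    have hn : ((n : ℝ) + 1) ≤ 2 ^ (n + 1) := by exact_mod_cast (n + 1).lt_two_pow_self.le
    rw [norm_mul, norm_mul, norm_pow]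
    calc ‖(n : 𝕜) + 1‖ * ‖c (n + 1)‖ * ‖y‖ ^ n ≤ 2 ^ (n + 1) * ‖c (n + 1)‖ * R ^ (n + 1) := by
          rw [show ‖(n : 𝕜) + 1‖ = n + 1 by exact_mod_cast RCLike.norm_natCast (K := 𝕜) (n + 1)]
          gcongr
          exact (pow_le_pow_left₀ (norm_nonneg y) hy n).trans (pow_le_pow_right₀ hR n.le_succ)
      _ = ‖c (n + 1)‖ * (2 * R) ^ (n + 1) := by rw [mul_pow]; ring

end PowerSeries

theorem risingFactorial_pos {θ : ℝ} (hθ : 0 < θ) (n : ℕ) : 0 < risingFactorial θ n :=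
  Finset.prod_pos fun i _ => by positivity

theorem abs_risingFactorial_le (θ : ℝ) (n : ℕ) : |risingFactorial θ n| ≤ (|θ| + 1) ^ n * n ! := by
  rw [risingFactorial, Finset.abs_prod, ← Finset.prod_range_add_one_eq_factorial, Nat.cast_prod,
    ← Finset.card_range n, ← Finset.prod_const, Finset.card_range, ← Finset.prod_mul_distrib]
  refine Finset.prod_le_prod (fun i _ => abs_nonneg _) fun i _ => ?_
  have hi : (0 : ℝ) ≤ i := i.cast_nonneg
  calc |θ + i| ≤ |θ| + i := by simpa [abs_of_nonneg hi] using abs_add_le θ i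
    _ ≤ (|θ| + 1) * ((i + 1 : ℕ) : ℝ) := by push_cast; nlinarith [abs_nonneg θ]

noncomputable def kummerCoeff (θ : ℝ) (n : ℕ) : ℝ := risingFactorial θ n / (n ! : ℝ) ^ 2

theorem kummerM_eq_tsum (θ t : ℝ) : kummerM θ t = ∑' n, kummerCoeff θ n * t ^ n := by
  simp only [kummerM, kummerCoeff, div_mul_eq_mul_div]

theorem abs_kummerCoeff_le (θ : ℝ) (n : ℕ) : |kummerCoeff θ n| ≤ (|θ| + 1) ^ n / n ! := by
  have hfac : (0 : ℝ) < n ! := by positivity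
  calc |kummerCoeff θ n| = |risingFactorial θ n| / (n ! : ℝ) ^ 2 := by
        rw [kummerCoeff, abs_div, abs_of_pos (pow_pos hfac 2)]
    _ ≤ (|θ| + 1) ^ n * n ! / (n ! : ℝ) ^ 2 := by gcongr; exact abs_risingFactorial_le θ n
    _ = (|θ| + 1) ^ n / n ! := by field_simp

theorem summable_norm_kummerCoeff_mul_pow (θ r : ℝ) :
    Summable fun n => ‖kummerCoeff θ n‖ * r ^ n := by
  refine .of_norm_bounded (Real.summable_pow_div_factorial ((|θ| + 1) * |r|)) fun n => ?_
  rw [norm_mul, norm_norm, Real.norm_eq_abs, Real.norm_eq_abs, abs_pow, mul_pow,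
    mul_div_right_comm]
  gcongr
  exact abs_kummerCoeff_le θ n

theorem kummerCoeff_succ (θ : ℝ) (n : ℕ) :
    ((n : ℝ) + 1) ^ 2 * kummerCoeff θ (n + 1) = (θ + n) * kummerCoeff θ n := by
  simp only [kummerCoeff, risingFactorial, Finset.prod_range_succ, Nat.factorial_succ]
  push_cast
  field_simp

noncomputable def kummerDeriv (θ u : ℝ) : ℝ :=
  ∑' n : ℕ, ((n : ℝ) + 1) * kummerCoeff θ (n + 1) * u ^ n

theorem hasDerivAt_kummerM (θ u : ℝ) : HasDerivAt (kummerM θ) (kummerDeriv θ u) u := by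
  have h := hasDerivAt_tsum_mul_pow (summable_norm_kummerCoeff_mul_pow θ) u
  rwa [← funext (kummerM_eq_tsum θ)] at h

theorem mul_kummerDeriv (θ u : ℝ) :
    u * kummerDeriv θ u = ∑' n : ℕ, n * kummerCoeff θ n * u ^ n := by
  rw [kummerDeriv, ← tsum_mul_left, (summable_mul_pow_of_forall_summable
    (forall_summable_natCast_mul (summable_norm_kummerCoeff_mul_pow θ)) u).tsum_eq_zero_add]
  simp only [CharP.cast_eq_zero, zero_mul, zero_add, Nat.cast_add, Nat.cast_one, pow_succ]
  exact tsum_congr fun n => by ring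

theorem hasDerivAt_mul_kummerDeriv (θ u : ℝ) :
    HasDerivAt (fun u => u * kummerDeriv θ u) (u * kummerDeriv θ u + θ * kummerM θ u) u := by
  have hc := summable_norm_kummerCoeff_mul_pow θ
  have hnc := forall_summable_natCast_mul hc
  rw [show (fun u => u * kummerDeriv θ u) = _ from funext (mul_kummerDeriv θ)]
  refine (hasDerivAt_tsum_mul_pow hnc u).congr_deriv ?_
  rw [mul_kummerDeriv, kummerM_eq_tsum, ← tsum_mul_left,
    ← (summable_mul_pow_of_forall_summable hnc u).tsum_add
      ((summable_mul_pow_of_forall_summable hc u).mul_left θ)]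
  refine tsum_congr fun n => ?_
  have := kummerCoeff_succ θ n
  push_cast
  linear_combination u ^ n * this

theorem hasDerivAt_Fkum (θ u : ℝ) :
    HasDerivAt (Fkum θ) (θ * (Real.exp (-u) * kummerM θ u)) u := by
  have hcont : Continuous fun t => Real.exp (-t) * kummerM θ t :=
    (Real.continuous_exp.comp continuous_neg).mul
      (continuous_iff_continuousAt.2 fun t => (hasDerivAt_kummerM θ t).continuousAt)
  exact (intervalIntegral.integral_hasDerivAt_right (hcont.intervalIntegrable 0 u)
    (hcont.stronglyMeasurableAtFilter _ _) hcont.continuousAt).const_mul θ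

theorem hasDerivAt_exp_neg_mul_mul_kummerDeriv (θ u : ℝ) :
    HasDerivAt (fun u => Real.exp (-u) * (u * kummerDeriv θ u))
      (θ * (Real.exp (-u) * kummerM θ u)) u :=
  ((hasDerivAt_neg u).exp.mul (hasDerivAt_mul_kummerDeriv θ u)).congr_deriv (by ring)

theorem exp_mul_Fkum (θ u : ℝ) : Real.exp u * Fkum θ u = u * kummerDeriv θ u := by
  have h : Fkum θ = fun u => Real.exp (-u) * (u * kummerDeriv θ u) :=
    eq_of_fderiv_eq (fun t => (hasDerivAt_Fkum θ t).differentiableAt)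
      (fun t => (hasDerivAt_exp_neg_mul_mul_kummerDeriv θ t).differentiableAt)
      (fun t => by rw [(hasDerivAt_Fkum θ t).hasFDerivAt.fderiv,
        (hasDerivAt_exp_neg_mul_mul_kummerDeriv θ t).hasFDerivAt.fderiv]) 0 (by simp [Fkum])
  rw [h, ← mul_assoc, ← Real.exp_add, add_neg_cancel, Real.exp_zero, one_mul]

theorem intervalIntegrable_pow_mul_one_sub_rpow {θ : ℝ} (hθ : 0 < θ) (m : ℕ) :
    IntervalIntegrable (fun β => β ^ m * (1 - β) ^ (θ - 1)) volume 0 1 := by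
  have h : IntervalIntegrable (fun β : ℝ => β ^ (θ - 1)) volume 0 1 :=
    intervalIntegral.intervalIntegrable_rpow' (by linarith)
  simpa using ((h.comp_sub_left 1).symm).continuousOn_mul (continuous_pow m).continuousOn

theorem integral_pow_mul_one_sub_rpow {θ : ℝ} (hθ : 0 < θ) (m : ℕ) :
    ∫ β in (0 : ℝ)..1, β ^ m * (1 - β) ^ (θ - 1) = m ! / risingFactorial θ (m + 1) := by
  have h := Complex.betaIntegral_eval_nat_add_one_right (u := θ) (by simpa using hθ) m
  rw [Complex.betaIntegral_symm, Complex.betaIntegral] at h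
  apply Complex.ofReal_injective
  rw [← intervalIntegral.integral_ofReal]
  push_cast [risingFactorial]
  rw [← h]
  refine intervalIntegral.integral_congr fun x hx => ?_
  rw [Set.uIcc_of_le zero_le_one] at hx
  rw [Complex.ofReal_cpow (by linarith [hx.2]), add_sub_cancel_right, Complex.cpow_natCast]
  push_cast
  ring

theorem hasSum_integral_tsum_mul_pow_mul {w : ℝ → ℝ} {A : ℕ → ℝ}
    (hw : ∀ m : ℕ, IntervalIntegrable (fun β => β ^ m * w β) volume 0 1)
    (hw_nonneg : ∀ β ∈ Set.Ioc (0 : ℝ) 1, 0 ≤ w β)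
    (hA : Summable fun m => |A m * ∫ β in (0 : ℝ)..1, β ^ m * w β|) :
    HasSum (fun m => A m * ∫ β in (0 : ℝ)..1, β ^ m * w β)
      (∫ β in (0 : ℝ)..1, (∑' m, A m * β ^ m) * w β) := by
  simp only [intervalIntegral.integral_of_le zero_le_one, ← tsum_mul_right, mul_assoc] at hA ⊢
  have hnonneg : ∀ m, ∀ β ∈ Set.Ioc (0 : ℝ) 1, 0 ≤ β ^ m * w β := fun m β hβ =>
    mul_nonneg (pow_nonneg hβ.1.le m) (hw_nonneg β hβ)
  have hnorm : ∀ m, ∫ β in Set.Ioc (0 : ℝ) 1, ‖A m * (β ^ m * w β)‖ =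
      |A m * ∫ β in Set.Ioc (0 : ℝ) 1, β ^ m * w β| := by
    intro m
    rw [abs_mul, abs_of_nonneg (setIntegral_nonneg measurableSet_Ioc (hnonneg m)),
      ← integral_const_mul]
    refine setIntegral_congr_fun measurableSet_Ioc fun β hβ => ?_
    rw [norm_mul, Real.norm_eq_abs, Real.norm_eq_abs, abs_of_nonneg (hnonneg m β hβ)]
  simp only [← integral_const_mul]
  exact hasSum_integral_of_summable_integral_norm (fun m => (hw m).1.const_mul (A m))
    (hA.congr fun m => (hnorm m).symm)

theorem hasSum_pow_succ_div_factorial (x : ℝ) :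
    HasSum (fun m => x ^ (m + 1) / (m + 1)!) (Real.exp x - 1) := by
  have h := NormedSpace.expSeries_div_hasSum_exp x
  rw [← hasSum_nat_add_iff' 1] at h
  simpa [Real.exp_eq_exp_ℝ] using h

theorem inv_mul_exp_mul_Fkum (θ x : ℝ) {β : ℝ} (hβ : β ≠ 0) :
    β⁻¹ * (Real.exp (x * β) * Fkum θ (x * β)) =
      ∑' m : ℕ, x ^ (m + 1) * ((m + 1) * kummerCoeff θ (m + 1)) * β ^ m := by
  have hx : β⁻¹ * (x * β) = x := by field_simp
  rw [exp_mul_Fkum, kummerDeriv, ← mul_assoc, hx, ← tsum_mul_left]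
  exact tsum_congr fun m => by ring

theorem succ_mul_kummerCoeff_succ_mul_factorial_div {θ : ℝ} (hθ : 0 < θ) (m : ℕ) :
    (m + 1) * kummerCoeff θ (m + 1) * (m ! / risingFactorial θ (m + 1)) = ((m + 1)! : ℝ)⁻¹ := by
  have := (risingFactorial_pos hθ (m + 1)).ne'
  rw [kummerCoeff, Nat.factorial_succ]
  push_cast
  field_simp

theorem Fkum_beta_integral_general (θ : ℝ) (hθ : 0 < θ) (a v : ℝ) :
    ∫ β in (0:ℝ)..1, β⁻¹ * (1 - β) ^ (θ - 1) * Real.exp (a * v * β) * Fkum θ (a * v * β) =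
      Real.exp (a * v) - 1 := by
  set x := a * v
  have hsum : HasSum (fun m : ℕ => x ^ (m + 1) * ((m + 1) * kummerCoeff θ (m + 1)) *
      ∫ β in (0 : ℝ)..1, β ^ m * (1 - β) ^ (θ - 1)) (Real.exp x - 1) := by
    convert hasSum_pow_succ_div_factorial x using 2 with m
    rw [integral_pow_mul_one_sub_rpow hθ, mul_assoc,
      succ_mul_kummerCoeff_succ_mul_factorial_div hθ, div_eq_mul_inv]
  have hintegrand : ∀ β ∈ Set.Ioc (0 : ℝ) 1,
      β⁻¹ * (1 - β) ^ (θ - 1) * Real.exp (x * β) * Fkum θ (x * β) =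
        (∑' m : ℕ, x ^ (m + 1) * ((m + 1) * kummerCoeff θ (m + 1)) * β ^ m) * (1 - β) ^ (θ - 1) :=
    fun β hβ => by rw [← inv_mul_exp_mul_Fkum θ x hβ.1.ne']; ring
  rw [intervalIntegral.integral_congr_ae (.of_forall fun β hβ =>
    hintegrand β (by rwa [Set.uIoc_of_le zero_le_one] at hβ))]
  exact (hasSum_integral_tsum_mul_pow_mul (intervalIntegrable_pow_mul_one_sub_rpow hθ)
    (fun β hβ => Real.rpow_nonneg (sub_nonneg.2 hβ.2) _) hsum.summable.abs).unique hsum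

/-- For `θ > 0`, `a > 0` and `v ≥ 0`,
`∫₀¹ β⁻¹ (1-β)^{θ-1} e^{avβ} F(avβ) dβ = e^{av} − 1`. -/
theorem Fkum_beta_integral (θ : ℝ) (hθ : 0 < θ) (a v : ℝ) (ha : 0 < a) (hv : 0 ≤ v) :
    ∫ β in (0:ℝ)..1, β⁻¹ * (1 - β) ^ (θ - 1) * Real.exp (a * v * β) * Fkum θ (a * v * β) =
      Real.exp (a * v) - 1 :=
  Fkum_beta_integral_general θ hθ a v
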